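/- arXiv:0909.0283 — 2 statements merged into one kernel-verified Lean document; each statement's English description precedes it below -/
import Mathlib

section
/- Fix a positive integer k and let λ, μ, ν be integers with 0 ≤ λ, μ, ν ≤ k. Then ν appears in the level-k affine su(2) fusion product [λ]∗[μ] — i.e. λ+μ−ν is even and |λ−μ| ≤ ν ≤ min(λ+μ, 2k−λ−μ) — if and only if the set T_{λ,μ}^ν is nonempty and λ+μ−ν is even. -/
open Matrix Complex Real

noncomputable section

/-- `SU(2)`: 2×2 complex unitary matrices with determinant 1. -/
def SU2 : Set (Matrix (Fin 2) (Fin 2) ℂ) :=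
  {g | g ∈ Matrix.unitaryGroup (Fin 2) ℂ ∧ g.det = 1}

/-- The diagonal matrix `t_λ = diag(exp(iπλ/k), exp(−iπλ/k))`. -/
def tmat (k : ℕ) (l : ℝ) : Matrix (Fin 2) (Fin 2) ℂ :=
  Matrix.diagonal ![Complex.exp (Complex.I * ((Real.pi * l / k : ℝ) : ℂ)),
    Complex.exp (-(Complex.I * ((Real.pi * l / k : ℝ) : ℂ)))]

/-- The conjugacy class `C_λ` of `t_λ` in `SU(2)`. -/
def conjClass (k : ℕ) (l : ℝ) : Set (Matrix (Fin 2) (Fin 2) ℂ) :=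
  {g | ∃ x ∈ SU2, g = x * tmat k l * x⁻¹}

/-- `T_{λ,μ}^ν = {(g,h) : g ∈ C_λ, h ∈ C_μ, g·h ∈ C_ν}`. -/
def Tset (k : ℕ) (l m n : ℝ) :
    Set (Matrix (Fin 2) (Fin 2) ℂ × Matrix (Fin 2) (Fin 2) ℂ) :=
  {p | p.1 ∈ conjClass k l ∧ p.2 ∈ conjClass k m ∧ p.1 * p.2 ∈ conjClass k n}


/-!
Identify `SU(2)` with the unit quaternions `a + b j`, realised as the matrices
`!![a, b; -conj b, conj a]` with `|a|² + |b|² = 1`. The trace is `2 Re a`, and it determines the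
conjugacy class: a matrix of trace `2 cos θ` is conjugated to `t_θ = diag(e^{iθ}, e^{-iθ})` by
normalising an eigenvector for `e^{iθ}`. Conjugating the second factor so that `g = t_p`,
`h = w t_q w⁻¹` with `w = a + b j`, one finds `tr (g h) = 2 (|a|² cos (p + q) + |b|² cos (p - q))`.
Hence `T_{λ,μ}^ν` is nonempty iff `cos (πν/k)` lies between `cos (π(λ+μ)/k)` and `cos (π(λ-μ)/k)`,
and since `cos` is decreasing on `[0, π]` and `cos (π(λ+μ)/k) = cos (π(2k-λ-μ)/k)`, this is the
fusion rule `|λ - μ| ≤ ν ≤ min (λ + μ, 2k - λ - μ)`.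
-/

open ComplexConjugate Set

namespace SU2

lemma one_mem : (1 : Matrix (Fin 2) (Fin 2) ℂ) ∈ SU2 :=
  (specialUnitaryGroup (Fin 2) ℂ).one_mem

lemma mul_mem {g h : Matrix (Fin 2) (Fin 2) ℂ} (hg : g ∈ SU2) (hh : h ∈ SU2) :
    g * h ∈ SU2 :=
  (specialUnitaryGroup (Fin 2) ℂ).mul_mem hg hh

lemma inv_eq_star {g : Matrix (Fin 2) (Fin 2) ℂ} (hg : g ∈ SU2) : g⁻¹ = star g :=
  inv_eq_right_inv (mem_unitaryGroup_iff.mp hg.1)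

lemma inv_mem {g : Matrix (Fin 2) (Fin 2) ℂ} (hg : g ∈ SU2) : g⁻¹ ∈ SU2 := by
  rw [inv_eq_star hg]
  exact (star ⟨g, hg⟩ : specialUnitaryGroup (Fin 2) ℂ).2

lemma isUnit_det {g : Matrix (Fin 2) (Fin 2) ℂ} (hg : g ∈ SU2) : IsUnit g.det :=
  hg.2 ▸ isUnit_one

end SU2

/-- The matrix of the quaternion `a + b j`. -/
def su2Mat (a b : ℂ) : Matrix (Fin 2) (Fin 2) ℂ := !![a, b; -conj b, conj a]

lemma su2Mat_mul_su2Mat (a b c d : ℂ) :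
    su2Mat a b * su2Mat c d = su2Mat (a * c - b * conj d) (a * d + b * conj c) := by
  ext i j; fin_cases i <;> fin_cases j <;> simp [su2Mat] <;> ring

lemma star_su2Mat (a b : ℂ) : star (su2Mat a b) = su2Mat (conj a) (-b) := by
  ext i j; fin_cases i <;> fin_cases j <;> simp [su2Mat]

lemma su2Mat_one_zero : su2Mat 1 0 = 1 := by
  ext i j; fin_cases i <;> fin_cases j <;> simp [su2Mat]

lemma trace_su2Mat (a b : ℂ) : (su2Mat a b).trace = 2 * (a.re : ℂ) := by
  rw [su2Mat, trace_fin_two_of, add_conj]; push_cast; ring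

lemma det_su2Mat (a b : ℂ) : (su2Mat a b).det = (normSq a + normSq b : ℝ) := by
  rw [su2Mat, det_fin_two_of, mul_conj, mul_neg, sub_neg_eq_add, mul_conj]; push_cast; ring

lemma su2Mat_mul_star (a b : ℂ) :
    su2Mat a b * star (su2Mat a b) = su2Mat (normSq a + normSq b : ℝ) 0 := by
  rw [star_su2Mat, su2Mat_mul_su2Mat]
  simp only [conj_conj, map_neg, mul_neg, sub_neg_eq_add, mul_conj]
  congr 1 <;> push_cast <;> ring

lemma ofReal_smul_su2Mat (r : ℝ) (a b : ℂ) :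
    (r : ℂ) • su2Mat a b = su2Mat (r * a) (r * b) := by
  ext i j; fin_cases i <;> fin_cases j <;> simp [su2Mat]

lemma su2Mat_mem_SU2 {a b : ℂ} (h : normSq a + normSq b = 1) : su2Mat a b ∈ SU2 := by
  refine ⟨mem_unitaryGroup_iff.mpr ?_, ?_⟩
  · rw [su2Mat_mul_star, h, ofReal_one, su2Mat_one_zero]
  · rw [det_su2Mat, h, ofReal_one]

lemma exists_eq_su2Mat {g : Matrix (Fin 2) (Fin 2) ℂ} (hg : g ∈ SU2) :
    ∃ a b, normSq a + normSq b = 1 ∧ g = su2Mat a b := by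
  have hadj : star g = adjugate g := by
    rw [← SU2.inv_eq_star hg, Matrix.inv_def, hg.2, Ring.inverse_one, one_smul]
  have h00 : conj (g 0 0) = g 1 1 := by simpa [adjugate_fin_two] using congr_fun₂ hadj 0 0
  have h10 : conj (g 0 1) = -g 1 0 := by simpa [adjugate_fin_two] using congr_fun₂ hadj 1 0
  have hg' : g = su2Mat (g 0 0) (g 0 1) := by
    ext i j; fin_cases i <;> fin_cases j <;> simp [su2Mat, ← h00, h10]
  refine ⟨g 0 0, g 0 1, ?_, hg'⟩
  have := hg.2
  rw [hg', det_su2Mat] at this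
  exact_mod_cast this

/-- `expDiag (π * l / k)` is `tmat k l`, and `angleClass (π * l / k)` below is `conjClass k l`,
both by definition. -/
def expDiag (θ : ℝ) : Matrix (Fin 2) (Fin 2) ℂ :=
  diagonal ![exp (I * (θ : ℂ)), exp (-(I * (θ : ℂ)))]

lemma expDiag_eq_su2Mat (θ : ℝ) : expDiag θ = su2Mat (exp (θ * I)) 0 := by
  ext i j; fin_cases i <;> fin_cases j <;> simp [expDiag, su2Mat, ← exp_conj, mul_comm]

lemma trace_expDiag (θ : ℝ) : (expDiag θ).trace = 2 * (Real.cos θ : ℂ) := by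
  rw [expDiag_eq_su2Mat, trace_su2Mat, exp_ofReal_mul_I_re]

def angleClass (θ : ℝ) : Set (Matrix (Fin 2) (Fin 2) ℂ) :=
  {g | ∃ x ∈ SU2, g = x * expDiag θ * x⁻¹}

lemma mem_angleClass_of_mul_su2Mat_eq {g : Matrix (Fin 2) (Fin 2) ℂ} {θ : ℝ} {α β : ℂ}
    (hαβ : normSq α + normSq β ≠ 0) (h : g * su2Mat α β = su2Mat α β * expDiag θ) :
    g ∈ angleClass θ := by
  set r := (√(normSq α + normSq β))⁻¹
  have hr : r ^ 2 * (normSq α + normSq β) = 1 := by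
    rw [inv_pow, sq_sqrt (add_nonneg (normSq_nonneg _) (normSq_nonneg _)), inv_mul_cancel₀ hαβ]
  have hx : (r : ℂ) • su2Mat α β ∈ SU2 := by
    rw [ofReal_smul_su2Mat]
    apply su2Mat_mem_SU2
    simp only [normSq_mul, normSq_ofReal]
    linear_combination hr
  have hgx : g * ((r : ℂ) • su2Mat α β) = (r : ℂ) • su2Mat α β * expDiag θ := by
    rw [Matrix.mul_smul, h, Matrix.smul_mul]
  refine ⟨_, hx, ?_⟩
  rw [← hgx]
  exact (mul_nonsing_inv_cancel_right _ g (SU2.isUnit_det hx)).symm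

/-- The first column `(b, i (sin θ - y))` of the right factor is an eigenvector of the left factor
for the eigenvalue `e^{iθ}`. -/
lemma su2Mat_mul_su2Mat_eq_mul_expDiag {θ y : ℝ} {b : ℂ}
    (hb : normSq b = Real.sin θ ^ 2 - y ^ 2) :
    su2Mat (Real.cos θ + y * I) b * su2Mat b (I * (Real.sin θ - y)) =
      su2Mat b (I * (Real.sin θ - y)) * expDiag θ := by
  have hbb : b * conj b = (Real.sin θ : ℂ) ^ 2 - (y : ℂ) ^ 2 := by
    rw [mul_conj, hb]; push_cast; ring
  rw [expDiag_eq_su2Mat, su2Mat_mul_su2Mat, su2Mat_mul_su2Mat, hbb, exp_mul_I, ← ofReal_cos,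
    ← ofReal_sin]
  simp only [map_add, map_sub, map_mul, conj_ofReal, conj_I, map_zero]
  congr 1
  · ring
  · linear_combination ((Real.sin θ : ℂ) ^ 2 - (y : ℂ) ^ 2) * I_sq

lemma mem_angleClass_iff {g : Matrix (Fin 2) (Fin 2) ℂ} (hg : g ∈ SU2) {θ : ℝ} :
    g ∈ angleClass θ ↔ g.trace = 2 * (Real.cos θ : ℂ) := by
  constructor
  · rintro ⟨x, hx, rfl⟩
    rw [trace_conj ((isUnit_iff_isUnit_det _).mpr (SU2.isUnit_det hx)), trace_expDiag]
  intro htr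
  obtain ⟨a, b, hab, rfl⟩ := exists_eq_su2Mat hg
  have hre : a.re = Real.cos θ := by
    rw [trace_su2Mat] at htr
    exact_mod_cast mul_left_cancel₀ two_ne_zero htr
  have ha : a = Real.cos θ + a.im * I := by rw [← hre, re_add_im]
  have hb : normSq b = Real.sin θ ^ 2 - a.im ^ 2 := by
    rw [normSq_apply, hre] at hab
    linear_combination hab - Real.sin_sq_add_cos_sq θ
  rcases eq_or_ne (Real.sin θ) a.im with hs | hs
  · have hb0 : b = 0 := normSq_eq_zero.mp (by rw [hb, hs, sub_self])
    refine ⟨1, SU2.one_mem, ?_⟩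
    rw [one_mul, inv_one, mul_one, expDiag_eq_su2Mat, hb0, exp_mul_I, ha, ← hs]
    push_cast; ring_nf
  · rw [ha]
    refine mem_angleClass_of_mul_su2Mat_eq ?_ (su2Mat_mul_su2Mat_eq_mul_expDiag hb)
    rw [← ofReal_sub, normSq_mul, normSq_I, one_mul, normSq_ofReal]
    exact (add_pos_of_nonneg_of_pos (normSq_nonneg b)
      (mul_self_pos.mpr (sub_ne_zero.mpr hs))).ne'

lemma trace_expDiag_mul_conj (p q : ℝ) (α β : ℂ) :
    (expDiag p * (su2Mat α β * expDiag q * star (su2Mat α β))).trace =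
      2 * ((normSq α * Real.cos (p + q) + normSq β * Real.cos (p - q) : ℝ) : ℂ) := by
  have hprod : ∀ r s : ℝ, exp (r * I) * exp (s * I) = exp ((r + s : ℝ) * I) := fun r s => by
    rw [← Complex.exp_add]; push_cast; ring_nf
  have hconj : conj (exp (q * I)) = exp ((-q : ℝ) * I) := by
    rw [← Complex.exp_conj, map_mul, conj_ofReal, conj_I]; push_cast; ring_nf
  simp only [expDiag_eq_su2Mat, star_su2Mat, su2Mat_mul_su2Mat, trace_su2Mat, map_zero,
    mul_zero, zero_mul, sub_zero, zero_add, map_neg, mul_neg, sub_neg_eq_add, hconj]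
  have hsum : exp (p * I) * (α * exp (q * I) * conj α + β * exp ((-q : ℝ) * I) * conj β) =
      normSq α * exp ((p + q : ℝ) * I) + normSq β * exp ((p + -q : ℝ) * I) := by
    rw [← hprod, ← hprod, ← mul_conj, ← mul_conj]; ring
  rw [hsum, ← sub_eq_add_neg, add_re, re_ofReal_mul, re_ofReal_mul, exp_ofReal_mul_I_re,
    exp_ofReal_mul_I_re]

lemma expDiag_mem_SU2 (θ : ℝ) : expDiag θ ∈ SU2 := by
  rw [expDiag_eq_su2Mat]
  apply su2Mat_mem_SU2
  rw [normSq_eq_norm_sq, norm_exp_ofReal_mul_I, map_zero]; norm_num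

lemma angleClass_subset_SU2 (θ : ℝ) : angleClass θ ⊆ SU2 := by
  rintro _ ⟨x, hx, rfl⟩
  exact SU2.mul_mem (SU2.mul_mem hx (expDiag_mem_SU2 θ)) (SU2.inv_mem hx)

lemma expDiag_mem_angleClass (θ : ℝ) : expDiag θ ∈ angleClass θ :=
  ⟨1, SU2.one_mem, by rw [one_mul, inv_one, mul_one]⟩

lemma trace_conj_mul_conj {n R : Type*} [Fintype n] [DecidableEq n] [CommRing R]
    {x y D E : Matrix n n R} (hx : IsUnit x.det) :
    (x * D * x⁻¹ * (y * E * y⁻¹)).trace = (D * (x⁻¹ * y * E * (x⁻¹ * y)⁻¹)).trace := by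
  rw [Matrix.mul_inv_rev, nonsing_inv_nonsing_inv _ hx,
    show x * D * x⁻¹ * (y * E * y⁻¹) = x * (D * x⁻¹ * y * E * y⁻¹) by
      simp only [Matrix.mul_assoc],
    trace_mul_comm]
  simp only [Matrix.mul_assoc]

lemma exists_mul_mem_angleClass_iff (p q r : ℝ) :
    (∃ g ∈ angleClass p, ∃ h ∈ angleClass q, g * h ∈ angleClass r) ↔
      Real.cos r ∈ segment ℝ (Real.cos (p + q)) (Real.cos (p - q)) := by
  constructor
  · rintro ⟨g, ⟨x, hx, rfl⟩, h, ⟨y, hy, rfl⟩, hgh⟩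
    obtain ⟨α, β, hαβ, hw⟩ := exists_eq_su2Mat (SU2.mul_mem (SU2.inv_mem hx) hy)
    have hgh_mem := SU2.mul_mem (angleClass_subset_SU2 p ⟨x, hx, rfl⟩)
      (angleClass_subset_SU2 q ⟨y, hy, rfl⟩)
    rw [mem_angleClass_iff hgh_mem, trace_conj_mul_conj (SU2.isUnit_det hx), hw,
      SU2.inv_eq_star (su2Mat_mem_SU2 hαβ), trace_expDiag_mul_conj] at hgh
    exact ⟨normSq α, normSq β, normSq_nonneg α, normSq_nonneg β, hαβ,
      by simp only [smul_eq_mul]; exact_mod_cast mul_left_cancel₀ two_ne_zero hgh⟩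
  · rintro ⟨u, v, hu, hv, huv, hcos⟩
    have hx : su2Mat √u √v ∈ SU2 := by
      apply su2Mat_mem_SU2
      rw [normSq_ofReal, normSq_ofReal, mul_self_sqrt hu, mul_self_sqrt hv, huv]
    refine ⟨_, expDiag_mem_angleClass p, _, ⟨_, hx, rfl⟩, ?_⟩
    have hgh_mem := SU2.mul_mem (expDiag_mem_SU2 p) (angleClass_subset_SU2 q ⟨_, hx, rfl⟩)
    rw [mem_angleClass_iff hgh_mem, SU2.inv_eq_star hx, trace_expDiag_mul_conj, normSq_ofReal,
      normSq_ofReal, mul_self_sqrt hu, mul_self_sqrt hv, ← hcos, smul_eq_mul, smul_eq_mul]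

lemma pi_mul_div_mem_Icc {k c : ℝ} (hk : 0 < k) (hc : c ∈ Icc 0 k) : π * c / k ∈ Icc 0 π :=
  ⟨by have := hc.1; positivity, by rw [div_le_iff₀ hk]; nlinarith [hc.2, pi_pos]⟩

lemma cos_pi_mul_div_le_iff {k a b : ℝ} (hk : 0 < k) (ha : a ∈ Icc 0 k) (hb : b ∈ Icc 0 k) :
    Real.cos (π * a / k) ≤ Real.cos (π * b / k) ↔ b ≤ a := by
  rw [strictAntiOn_cos.le_iff_ge (pi_mul_div_mem_Icc hk ha) (pi_mul_div_mem_Icc hk hb),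
    div_le_div_iff_of_pos_right hk, mul_le_mul_iff_right₀ pi_pos]

lemma cos_add_le_cos_sub {p q : ℝ} (hp : p ∈ Icc 0 π) (hq : q ∈ Icc 0 π) :
    Real.cos (p + q) ≤ Real.cos (p - q) := by
  have := mul_nonneg (sin_nonneg_of_mem_Icc hp) (sin_nonneg_of_mem_Icc hq)
  rw [Real.cos_add, Real.cos_sub]
  linarith

lemma cos_mem_segment_iff_fusion {k : ℕ} (hk : 0 < k) {l m n : ℤ}
    (hl : 0 ≤ l ∧ l ≤ k) (hm : 0 ≤ m ∧ m ≤ k) (hn : 0 ≤ n ∧ n ≤ k) :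
    Real.cos (π * n / k) ∈
        segment ℝ (Real.cos (π * l / k + π * m / k)) (Real.cos (π * l / k - π * m / k)) ↔
      |l - m| ≤ n ∧ n ≤ min (l + m) (2 * k - l - m) := by
  have hkR : (0 : ℝ) < k := by exact_mod_cast hk
  have hIcc (a : ℤ) (ha : 0 ≤ a ∧ a ≤ k) : (a : ℝ) ∈ Icc 0 (k : ℝ) :=
    ⟨by exact_mod_cast ha.1, by exact_mod_cast ha.2⟩
  have hcos_le (a b : ℤ) (ha : 0 ≤ a ∧ a ≤ k) (hb : 0 ≤ b ∧ b ≤ k) :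
      Real.cos (π * a / k) ≤ Real.cos (π * b / k) ↔ b ≤ a := by
    rw [cos_pi_mul_div_le_iff hkR (hIcc a ha) (hIcc b hb), Int.cast_le]
  have hsub : Real.cos (π * l / k - π * m / k) = Real.cos (π * ((|l - m| : ℤ) : ℝ) / k) := by
    rw [← Real.cos_abs, Int.cast_abs, Int.cast_sub, mul_div_assoc, mul_div_assoc, ← mul_sub,
      ← sub_div, abs_mul, abs_of_pos pi_pos, abs_div, abs_of_pos hkR, ← mul_div_assoc]
  have hadd : Real.cos (π * l / k + π * m / k) =
      Real.cos (π * ((min (l + m) (2 * k - l - m) : ℤ) : ℝ) / k) := by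
    rcases min_cases (l + m) (2 * k - l - m) with ⟨h, -⟩ | ⟨h, -⟩ <;> rw [h]
    · push_cast; ring_nf
    -- `cos (2π - x) = cos x` folds an angle `π (λ + μ) / k > π` back into `[0, π]`.
    · rw [← Real.cos_two_pi_sub]; push_cast; congr 1; field_simp; ring
  have habs : 0 ≤ |l - m| ∧ |l - m| ≤ k :=
    ⟨abs_nonneg _, abs_sub_le_iff.mpr ⟨by omega, by omega⟩⟩
  rw [segment_eq_Icc (cos_add_le_cos_sub (pi_mul_div_mem_Icc hkR (hIcc l hl))
      (pi_mul_div_mem_Icc hkR (hIcc m hm))), mem_Icc, hsub, hadd,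
    hcos_le _ _ (by omega) hn, hcos_le _ _ hn habs, and_comm]

lemma Tset_nonempty_iff (k : ℕ) (l m n : ℝ) :
    (Tset k l m n).Nonempty ↔ Real.cos (π * n / k) ∈
      segment ℝ (Real.cos (π * l / k + π * m / k)) (Real.cos (π * l / k - π * m / k)) := by
  rw [← exists_mul_mem_angleClass_iff]
  exact ⟨fun ⟨(g, h), hg, hh, hgh⟩ => ⟨g, hg, h, hh, hgh⟩,
    fun ⟨g, hg, h, hh, hgh⟩ => ⟨(g, h), hg, hh, hgh⟩⟩

theorem stmt2 (k : ℕ) (hk : 0 < k) (lam mu nu : ℤ)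
    (hlam : 0 ≤ lam ∧ lam ≤ k) (hmu : 0 ≤ mu ∧ mu ≤ k) (hnu : 0 ≤ nu ∧ nu ≤ k) :
    (Even (lam + mu - nu) ∧
        |lam - mu| ≤ nu ∧ nu ≤ min (lam + mu) (2 * k - lam - mu)) ↔
      ((Tset k (lam : ℝ) (mu : ℝ) (nu : ℝ)).Nonempty ∧ Even (lam + mu - nu)) := by
  rw [Tset_nonempty_iff, cos_mem_segment_iff_fusion hk hlam hmu hnu, and_comm]
end
end

section
/- Fix a positive integer k, let λ, μ ∈ (0,k) and ν ∈ [0,k]. The set {θ ∈ [0, π/2] : t_λ · e^{iθσ₂} · t_μ · e^{−iθσ₂} ∈ C_ν} contains at most one element, and it is nonempty if and only if |λ−μ| ≤ ν ≤ min(λ+μ, 2k−λ−μ). -/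
open Matrix Complex Real

noncomputable section

/-- The rotation matrix `e^{iθσ₂} = [[cos θ, sin θ],[−sin θ, cos θ]]`. -/
def rotY (θ : ℝ) : Matrix (Fin 2) (Fin 2) ℂ :=
  !![((Real.cos θ : ℝ) : ℂ), ((Real.sin θ : ℝ) : ℂ);
     ((-(Real.sin θ) : ℝ) : ℂ), ((Real.cos θ : ℝ) : ℂ)]

/-
An element of SU(2) is conjugate to `t_ν` exactly when its trace is `2 cos (πν/k)`: its
characteristic polynomial then has the root `e = exp (iπν/k)`, and a unit eigenvector `(u, v)`
for `e` gives the conjugating matrix `[[u, -v̄], [v, ū]]`, whose second column is an eigenvector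
for `ē`.

With `a = πλ/k` and `b = πμ/k`, the trace of `t_λ e^{iθσ₂} t_μ e^{-iθσ₂}` is
`2 (cos (a + b) cos² θ + cos (a - b) sin² θ)`, which increases strictly on `[0, π/2]` from
`2 cos (a + b)` to `2 cos (a - b)` since `sin a sin b > 0`. So there is at most one solution, and
one exists iff `cos (a + b) ≤ cos (πν/k) ≤ cos (a - b)`; as `cos` decreases on `[0, π]`, this
is a pair of linear bounds on `ν`.
-/

open ComplexConjugate

lemma mul_mem_SU2 {g h : Matrix (Fin 2) (Fin 2) ℂ} (hg : g ∈ SU2) (hh : h ∈ SU2) :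
    g * h ∈ SU2 :=
  ⟨mul_mem hg.1 hh.1, by rw [det_mul, hg.2, hh.2, one_mul]⟩

lemma mem_SU2_iff {g : Matrix (Fin 2) (Fin 2) ℂ} :
    g ∈ SU2 ↔ ∃ a b : ℂ, normSq a + normSq b = 1 ∧ g = !![a, -conj b; b, conj a] := by
  constructor
  · rintro ⟨hu, hdet⟩
    have hstar : star g = g.adjugate := by
      rw [← inv_eq_right_inv (mem_unitaryGroup_iff.mp hu),
        ← inv_eq_right_inv (by rw [mul_adjugate, hdet, one_smul] : g * g.adjugate = 1)]
    have h11 : g 1 1 = conj (g 0 0) := by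
      simpa [star_apply, adjugate_fin_two] using (congrFun₂ hstar 0 0).symm
    have h01 : g 0 1 = -conj (g 1 0) := by
      simpa [star_apply, adjugate_fin_two] using congrArg conj (congrFun₂ hstar 1 0)
    have hnorm := congrFun₂ (mem_unitaryGroup_iff'.mp hu) 0 0
    simp only [mul_apply, Fin.sum_univ_two, star_apply, RCLike.star_def, one_apply_eq] at hnorm
    refine ⟨g 0 0, g 1 0, ?_, ?_⟩
    · exact_mod_cast (by push_cast; rw [← mul_conj, ← mul_conj]; linear_combination hnorm :
        ((normSq (g 0 0) + normSq (g 1 0) : ℝ) : ℂ) = 1)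
    · conv_lhs => rw [eta_fin_two g, h11, h01]
  · rintro ⟨a, b, h, rfl⟩
    have h' : a * conj a + b * conj b = 1 := by rw [mul_conj, mul_conj]; exact_mod_cast h
    refine ⟨mem_unitaryGroup_iff.mpr ?_, ?_⟩
    · ext i j
      fin_cases i <;> fin_cases j <;>
        simp only [Fin.zero_eta, Fin.mk_one, mul_apply, Fin.sum_univ_two, of_apply, cons_val',
          cons_val_zero, cons_val_one, cons_val_fin_one, star_apply, RCLike.star_def, map_neg,
          conj_conj, mul_neg, neg_mul, neg_neg, one_apply_eq, one_apply_ne, ne_eq, zero_ne_one,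
          one_ne_zero, not_false_eq_true]
      · linear_combination h'
      · ring
      · ring
      · linear_combination h'
    · rw [det_fin_two_of]; linear_combination h'

lemma exists_unit_eigenvector {a b e : ℂ} (hab : normSq a + normSq b = 1) (he : ‖e‖ = 1)
    (htr : a + conj a = e + conj e) :
    ∃ u v : ℂ, normSq u + normSq v = 1 ∧
      a * u - conj b * v = e * u ∧ b * u + conj a * v = e * v := by
  have hab' : a * conj a + b * conj b = 1 := by rw [mul_conj, mul_conj]; exact_mod_cast hab
  have he' : e * conj e = 1 := by rw [mul_conj, normSq_eq_norm_sq, he]; norm_num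
  have hdet : (!![a - e, -conj b; b, conj a - e]).det = 0 := by
    rw [det_fin_two_of]; linear_combination hab' - e * htr - he'
  obtain ⟨w, hw0, hw⟩ := exists_mulVec_eq_zero_iff.mpr hdet
  have hw₀ := congrFun hw 0
  have hw₁ := congrFun hw 1
  simp only [mulVec, dotProduct, Fin.sum_univ_two, of_apply, cons_val', cons_val_zero,
    cons_val_one, empty_val', cons_val_fin_one, Pi.zero_apply] at hw₀ hw₁
  set r := normSq (w 0) + normSq (w 1)
  have hr : 0 < r := by
    by_contra! h
    have h₀ : normSq (w 0) = 0 := by linarith [normSq_nonneg (w 0), normSq_nonneg (w 1)]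
    have h₁ : normSq (w 1) = 0 := by linarith [normSq_nonneg (w 0), normSq_nonneg (w 1)]
    refine hw0 (funext fun i => ?_)
    fin_cases i
    exacts [normSq_eq_zero.mp h₀, normSq_eq_zero.mp h₁]
  set s : ℝ := (√r)⁻¹
  refine ⟨s * w 0, s * w 1, ?_, by linear_combination s * hw₀, by linear_combination s * hw₁⟩
  simp only [normSq_mul, normSq_ofReal]
  rw [← mul_add, ← sq, inv_pow, sq_sqrt hr.le, inv_mul_cancel₀ hr.ne']

lemma exists_mem_SU2_eq_conj_diagonal {g : Matrix (Fin 2) (Fin 2) ℂ} (hg : g ∈ SU2) {e : ℂ}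
    (he : ‖e‖ = 1) (htr : g.trace = e + conj e) :
    ∃ x ∈ SU2, g = x * diagonal ![e, conj e] * x⁻¹ := by
  obtain ⟨a, b, hab, rfl⟩ := mem_SU2_iff.mp hg
  rw [trace_fin_two_of] at htr
  obtain ⟨u, v, huv, h₀, h₁⟩ := exists_unit_eigenvector hab he htr
  have hx : !![u, -conj v; v, conj u] ∈ SU2 := mem_SU2_iff.mpr ⟨u, v, huv, rfl⟩
  have hconj₀ := congrArg conj h₀
  have hconj₁ := congrArg conj h₁
  simp only [map_add, map_sub, map_mul, conj_conj] at hconj₀ hconj₁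
  have hmul : !![a, -conj b; b, conj a] * !![u, -conj v; v, conj u] =
      !![u, -conj v; v, conj u] * diagonal ![e, conj e] := by
    rw [diagonal_fin_two, mul_fin_two, mul_fin_two]
    ext i j; fin_cases i <;> fin_cases j <;>
      simp only [Fin.zero_eta, Fin.mk_one, of_apply, cons_val', cons_val_zero, cons_val_one,
        cons_val_fin_one, mul_zero, add_zero, zero_add]
    · linear_combination h₀
    · linear_combination -hconj₁
    · linear_combination h₁
    · linear_combination hconj₀
  refine ⟨_, hx, ?_⟩
  rw [← hmul, mul_nonsing_inv_cancel_right _ _ (by rw [hx.2]; exact isUnit_one)]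

lemma tmat_eq_diagonal (k : ℕ) (l : ℝ) :
    tmat k l = diagonal ![cexp (↑(π * l / k) * I), conj (cexp (↑(π * l / k) * I))] := by
  rw [tmat, ← exp_conj, map_mul, conj_ofReal, conj_I, mul_neg, mul_comm]

lemma isUnit_of_mem_SU2 {x : Matrix (Fin 2) (Fin 2) ℂ} (hx : x ∈ SU2) : IsUnit x :=
  (isUnit_iff_isUnit_det x).mpr (hx.2 ▸ isUnit_one)

lemma mem_conjClass_iff_trace_eq {k : ℕ} {l : ℝ} {g : Matrix (Fin 2) (Fin 2) ℂ} (hg : g ∈ SU2) :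
    g ∈ conjClass k l ↔ g.trace = 2 * Real.cos (π * l / k) := by
  have htr : (tmat k l).trace = cexp (↑(π * l / k) * I) + conj (cexp (↑(π * l / k) * I)) := by
    rw [tmat_eq_diagonal, trace_diagonal, Fin.sum_univ_two]; rfl
  rw [show (2 * Real.cos (π * l / k) : ℂ) =
      cexp (↑(π * l / k) * I) + conj (cexp (↑(π * l / k) * I)) by
    rw [add_conj, exp_ofReal_mul_I_re]; push_cast; rfl]
  constructor
  · rintro ⟨x, hx, rfl⟩
    rw [trace_conj (isUnit_of_mem_SU2 hx), htr]
  · intro h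
    show ∃ x ∈ SU2, g = x * tmat k l * x⁻¹
    rw [tmat_eq_diagonal]
    exact exists_mem_SU2_eq_conj_diagonal hg (norm_exp_ofReal_mul_I _) h

lemma tmat_mem_SU2 (k : ℕ) (l : ℝ) : tmat k l ∈ SU2 :=
  mem_SU2_iff.mpr ⟨cexp (↑(π * l / k) * I), 0,
    by rw [normSq_eq_norm_sq, norm_exp_ofReal_mul_I, map_zero]; norm_num,
    by rw [tmat_eq_diagonal, diagonal_fin_two, map_zero, neg_zero]; rfl⟩

lemma rotY_mem_SU2 (θ : ℝ) : rotY θ ∈ SU2 :=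
  mem_SU2_iff.mpr ⟨Real.cos θ, ↑(-Real.sin θ),
    by rw [normSq_ofReal, normSq_ofReal]; linarith [Real.cos_sq_add_sin_sq θ],
    by simp only [rotY, ofReal_neg, map_neg, conj_ofReal, neg_neg]⟩

lemma trace_diagonal_mul_rotY_mul_diagonal_mul_rotY_neg (e f : ℂ) (θ : ℝ) :
    (diagonal ![e, conj e] * rotY θ * diagonal ![f, conj f] * rotY (-θ)).trace =
      (e * f + conj (e * f)) * Real.cos θ ^ 2 +
        (e * conj f + conj (e * conj f)) * Real.sin θ ^ 2 := by
  rw [diagonal_fin_two, diagonal_fin_two, rotY, rotY, mul_fin_two, mul_fin_two, mul_fin_two,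
    trace_fin_two_of]
  simp only [cons_val_zero, cons_val_one, cons_val_fin_one, Real.cos_neg, Real.sin_neg,
    ofReal_neg, mul_zero, zero_mul, add_zero, zero_add, mul_neg, neg_mul, neg_neg, map_mul,
    conj_conj]
  ring

lemma trace_tmat_mul_rotY_mul_tmat_mul_rotY_neg (k : ℕ) (lam mu θ : ℝ) :
    (tmat k lam * rotY θ * tmat k mu * rotY (-θ)).trace =
      2 * (Real.cos (π * lam / k + π * mu / k) * Real.cos θ ^ 2 +
        Real.cos (π * lam / k - π * mu / k) * Real.sin θ ^ 2 : ℝ) := by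
  have hadd : cexp (↑(π * lam / k) * I) * cexp (↑(π * mu / k) * I) =
      cexp (↑(π * lam / k + π * mu / k) * I) := by
    rw [← Complex.exp_add]; push_cast; ring_nf
  have hsub : cexp (↑(π * lam / k) * I) * conj (cexp (↑(π * mu / k) * I)) =
      cexp (↑(π * lam / k - π * mu / k) * I) := by
    rw [← exp_conj, ← Complex.exp_add, map_mul, conj_ofReal, conj_I]; push_cast; ring_nf
  rw [tmat_eq_diagonal, tmat_eq_diagonal, trace_diagonal_mul_rotY_mul_diagonal_mul_rotY_neg,
    hadd, hsub, add_conj, add_conj, exp_ofReal_mul_I_re, exp_ofReal_mul_I_re]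
  push_cast
  ring

lemma tmat_mul_rotY_mul_tmat_mul_rotY_neg_mem_conjClass_iff (k : ℕ) (lam mu nu θ : ℝ) :
    tmat k lam * rotY θ * tmat k mu * rotY (-θ) ∈ conjClass k nu ↔
      Real.cos (π * lam / k + π * mu / k) * Real.cos θ ^ 2 +
        Real.cos (π * lam / k - π * mu / k) * Real.sin θ ^ 2 = Real.cos (π * nu / k) := by
  have hmem : tmat k lam * rotY θ * tmat k mu * rotY (-θ) ∈ SU2 :=
    mul_mem_SU2 (mul_mem_SU2 (mul_mem_SU2 (tmat_mem_SU2 k lam) (rotY_mem_SU2 θ))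
      (tmat_mem_SU2 k mu)) (rotY_mem_SU2 (-θ))
  rw [mem_conjClass_iff_trace_eq hmem, trace_tmat_mul_rotY_mul_tmat_mul_rotY_neg,
    mul_right_inj' two_ne_zero, ofReal_inj]

lemma MonotoneOn.nonempty_sep_Icc_eq_iff {α δ : Type*} [ConditionallyCompleteLinearOrder α]
    [TopologicalSpace α] [OrderTopology α] [DenselyOrdered α] [LinearOrder δ] [TopologicalSpace δ]
    [OrderClosedTopology δ] {f : α → δ} {a b : α} {y : δ} (hab : a ≤ b)
    (hmono : MonotoneOn f (Set.Icc a b)) (hcont : ContinuousOn f (Set.Icc a b)) :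
    {x ∈ Set.Icc a b | f x = y}.Nonempty ↔ f a ≤ y ∧ y ≤ f b := by
  constructor
  · rintro ⟨x, hx, rfl⟩
    exact ⟨hmono (Set.left_mem_Icc.2 hab) hx hx.1, hmono hx (Set.right_mem_Icc.2 hab) hx.2⟩
  · intro hy
    obtain ⟨x, hx, hfx⟩ := intermediate_value_Icc hab hcont hy
    exact ⟨x, hx, hfx⟩

lemma strictMonoOn_mul_cos_sq_add_mul_sin_sq {A B : ℝ} (h : A < B) :
    StrictMonoOn (fun θ => A * Real.cos θ ^ 2 + B * Real.sin θ ^ 2) (Set.Icc 0 (π / 2)) := by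
  intro x hx y hy hxy
  have hsin : Real.sin x < Real.sin y :=
    Real.strictMonoOn_sin ⟨by linarith [hx.1, pi_pos], hx.2⟩ ⟨by linarith [hy.1, pi_pos], hy.2⟩
      hxy
  have hsin₀ : 0 ≤ Real.sin x :=
    Real.sin_nonneg_of_nonneg_of_le_pi hx.1 (by linarith [hx.2, pi_pos])
  simp only [Real.cos_sq']
  nlinarith [mul_pos (sub_pos.2 h) (add_pos_of_nonneg_of_pos hsin₀ (hsin₀.trans_lt hsin))]

lemma cos_add_lt_cos_sub {a b : ℝ} (ha : 0 < Real.sin a) (hb : 0 < Real.sin b) :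
    Real.cos (a + b) < Real.cos (a - b) := by
  rw [Real.cos_add, Real.cos_sub]
  nlinarith [mul_pos ha hb]

lemma sin_pi_mul_div_pos {k x : ℝ} (hx : x ∈ Set.Ioo 0 k) : 0 < Real.sin (π * x / k) := by
  have hk : 0 < k := hx.1.trans hx.2
  refine Real.sin_pos_of_pos_of_lt_pi (by have := hx.1; positivity) ?_
  rw [div_lt_iff₀ hk]
  nlinarith [pi_pos, hx.2]

lemma cos_pi_mul_div_le_cos_pi_mul_div_iff {k u v : ℝ} (hk : 0 < k) (hu : u ∈ Set.Icc 0 k)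
    (hv : v ∈ Set.Icc 0 k) : Real.cos (π * u / k) ≤ Real.cos (π * v / k) ↔ v ≤ u := by
  have hmem : ∀ w ∈ Set.Icc 0 k, π * w / k ∈ Set.Icc 0 π := fun w hw =>
    ⟨by have := hw.1; positivity, by rw [div_le_iff₀ hk]; nlinarith [pi_pos, hw.2]⟩
  rw [Real.strictAntiOn_cos.le_iff_ge (hmem u hu) (hmem v hv), div_le_div_iff_of_pos_right hk,
    mul_le_mul_iff_right₀ pi_pos]

lemma cos_le_cos_sub_iff {k lam mu nu : ℝ} (hk : 0 < k) (hlam : lam ∈ Set.Icc 0 k)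
    (hmu : mu ∈ Set.Icc 0 k) (hnu : nu ∈ Set.Icc 0 k) :
    Real.cos (π * nu / k) ≤ Real.cos (π * lam / k - π * mu / k) ↔ |lam - mu| ≤ nu := by
  have hcos : Real.cos (π * lam / k - π * mu / k) = Real.cos (π * |lam - mu| / k) := by
    rw [← Real.cos_abs, show π * lam / k - π * mu / k = π * (lam - mu) / k by ring, abs_div,
      abs_mul, abs_of_pos pi_pos, abs_of_pos hk]
  rw [hcos, cos_pi_mul_div_le_cos_pi_mul_div_iff hk hnu
    ⟨abs_nonneg _, abs_sub_le_iff.2 ⟨by linarith [hlam.2, hmu.1], by linarith [hlam.1, hmu.2]⟩⟩]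

lemma cos_add_le_cos_iff {k lam mu nu : ℝ} (hk : 0 < k) (hlam : lam ∈ Set.Icc 0 k)
    (hmu : mu ∈ Set.Icc 0 k) (hnu : nu ∈ Set.Icc 0 k) :
    Real.cos (π * lam / k + π * mu / k) ≤ Real.cos (π * nu / k) ↔
      nu ≤ min (lam + mu) (2 * k - lam - mu) := by
  have hcos : Real.cos (π * lam / k + π * mu / k) =
      Real.cos (π * min (lam + mu) (2 * k - lam - mu) / k) := by
    rcases le_total (lam + mu) (2 * k - lam - mu) with h | h
    · rw [min_eq_left h, mul_add, add_div]
    · rw [min_eq_right h, ← Real.cos_two_pi_sub]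
      congr 1
      field_simp
      ring
  rw [hcos, cos_pi_mul_div_le_cos_pi_mul_div_iff hk ?_ hnu]
  refine ⟨le_min (by linarith [hlam.1, hmu.1]) (by linarith [hlam.2, hmu.2]), ?_⟩
  rcases le_total (lam + mu) k with h | h
  · exact (min_le_left _ _).trans h
  · exact (min_le_right _ _).trans (by linarith)

theorem stmt6_general (k : ℕ) (lam mu nu : ℝ)
    (hlam : lam ∈ Set.Ioo (0:ℝ) k) (hmu : mu ∈ Set.Ioo (0:ℝ) k)
    (hnu : nu ∈ Set.Icc (0:ℝ) k) :
    ({θ ∈ Set.Icc (0:ℝ) (Real.pi / 2) |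
        tmat k lam * rotY θ * tmat k mu * rotY (-θ) ∈ conjClass k nu}).Subsingleton ∧
      (({θ ∈ Set.Icc (0:ℝ) (Real.pi / 2) |
            tmat k lam * rotY θ * tmat k mu * rotY (-θ) ∈ conjClass k nu}).Nonempty ↔
        |lam - mu| ≤ nu ∧ nu ≤ min (lam + mu) (2 * k - lam - mu)) := by
  have hk : (0 : ℝ) < k := hlam.1.trans hlam.2
  have hmono := strictMonoOn_mul_cos_sq_add_mul_sin_sq
    (cos_add_lt_cos_sub (sin_pi_mul_div_pos hlam) (sin_pi_mul_div_pos hmu))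
  simp only [tmat_mul_rotY_mul_tmat_mul_rotY_neg_mem_conjClass_iff]
  refine ⟨fun x hx y hy => hmono.injOn hx.1 hy.1 (hx.2.trans hy.2.symm), ?_⟩
  rw [hmono.monotoneOn.nonempty_sep_Icc_eq_iff (by positivity) (by fun_prop)]
  simp only [Real.cos_zero, Real.sin_zero, Real.cos_pi_div_two, Real.sin_pi_div_two, one_pow,
    zero_pow two_ne_zero, mul_one, mul_zero, add_zero, zero_add]
  rw [cos_add_le_cos_iff hk (Set.Ioo_subset_Icc_self hlam) (Set.Ioo_subset_Icc_self hmu) hnu,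
    cos_le_cos_sub_iff hk (Set.Ioo_subset_Icc_self hlam) (Set.Ioo_subset_Icc_self hmu) hnu]
  exact and_comm

theorem stmt6 (k : ℕ) (hk : 0 < k) (lam mu nu : ℝ)
    (hlam : lam ∈ Set.Ioo (0:ℝ) k) (hmu : mu ∈ Set.Ioo (0:ℝ) k)
    (hnu : nu ∈ Set.Icc (0:ℝ) k) :
    ({θ ∈ Set.Icc (0:ℝ) (Real.pi / 2) |
        tmat k lam * rotY θ * tmat k mu * rotY (-θ) ∈ conjClass k nu}).Subsingleton ∧
      (({θ ∈ Set.Icc (0:ℝ) (Real.pi / 2) |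
            tmat k lam * rotY θ * tmat k mu * rotY (-θ) ∈ conjClass k nu}).Nonempty ↔
        |lam - mu| ≤ nu ∧ nu ≤ min (lam + mu) (2 * k - lam - mu)) :=
  stmt6_general k lam mu nu hlam hmu hnu
end
end
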